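/- If α < 0, then the polynomial P_α(X) = X⁶ + 2X⁵ − (α+3)X⁴ − 2(α+3)X³ + (2−α)X² + 4X + 1 has no real roots. -/
import Mathlib

def Ppoly (α X : ℝ) : ℝ :=
  X ^ 6 + 2 * X ^ 5 - (α + 3) * X ^ 4 - 2 * (α + 3) * X ^ 3 + (2 - α) * X ^ 2 + 4 * X + 1

theorem stmt4 (α : ℝ) (hα : α < 0) : ∀ X : ℝ, Ppoly α X ≠ 0 := by
  intro X h
  have key : (X^3 + X^2 - 2*X - 1)^2 + (-α) * (X*(X+1))^2 = 0 := by
    unfold Ppoly at h; nlinarith [h]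
  by_cases hx : X * (X + 1) = 0
  · rcases mul_eq_zero.mp hx with h0 | h1
    · subst h0; unfold Ppoly at h; norm_num at h
    · have : X = -1 := by linarith
      subst this; unfold Ppoly at h; nlinarith [h]
  · have h1 : (X*(X+1))^2 > 0 := by positivity
    nlinarith [sq_nonneg (X^3 + X^2 - 2*X - 1), mul_pos (neg_pos.mpr hα) h1]
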